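/- arXiv:2505.22136 — 2 statements merged into one kernel-verified Lean document; each statement's English description precedes it below -/
import Mathlib

section
/- Let μ = g(x)dx be a Borel probability measure on ℝ whose density g satisfies |ĝ(ξ)| = O(|ξ|^{-α}) for some α > 1/2. Suppose that for every A > 0 there is a countable set Λ_A ⊂ ℝ, enumerated in increasing order, such that ∑_{λ∈Λ_A} |∫ f(x) e^{-2πiλx} dμ(x)|² ≥ A ∫ |f(x)|² dμ(x) for all f ∈ L²(μ). Then g_min(Λ_A) → 0 as A → ∞. -/
open MeasureTheory Filter Set
open scoped Real

/-- The essential minimal spectral gap of an increasing enumeration `lam : ℤ → ℝ`: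
`inf {c ≥ 0 : g_k < c for infinitely many k}` where `g_k = lam k - lam (k-1)`. -/
noncomputable def gmin (lam : ℤ → ℝ) : ℝ :=
  sInf {c : ℝ | 0 ≤ c ∧ {k : ℤ | lam k - lam (k - 1) < c}.Infinite}

/-!
Test the frame inequality on a character `x ↦ e^{2πitx}`: it becomes `A ≤ ∑ₖ |ĝ(λₖ - t)|²`.
If only finitely many gaps of `Λ_A` were shorter than `ε`, all the short gaps sit in a bounded
window of indices. Put `t` at `λⱼ + ε/2` for an index `j` far to the left of that window.
On each side of the window the points are `ε`-separated and at distance `≥ ε/2` from `t`, so each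
cell `t ± [ε/2 + mε, ε/2 + (m+1)ε)` holds at most one of them and they contribute at most a
fixed multiple of `∑ₘ C²(ε/2 + mε)^{-2α}`, finite because `2α > 1`; the finitely many points of the window are far
enough from `t` to contribute at most `1`. So `A` is bounded in terms of `ε`, and for larger `A`
infinitely many gaps are shorter than `ε`, i.e. `gmin (lam A) ≤ ε`.
-/

theorem summable_add_mul_rpow_neg {a b s : ℝ} (ha : 0 < a) (hb : 0 < b) (hs : 1 < s) :
    Summable fun m : ℕ => (a + m * b) ^ (-s) := by
  refine ((Real.summable_one_div_nat_add_rpow (a / b) s).2 hs).mul_left (b ^ (-s)) |>.congr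
    fun m => ?_
  have hm : 0 < (m : ℝ) + a / b := by positivity
  rw [abs_of_pos hm, one_div, ← Real.rpow_neg hm.le, ← Real.mul_rpow hb.le hm.le]
  congr 1
  field_simp
  ring

section Separated

variable {φ : ℝ → ℝ} {ε : ℝ}

theorem sum_le_tsum_of_separated {ι : Type*} (hε : 0 < ε) (hφ : AntitoneOn φ (Ioi 0))
    (hφ0 : ∀ r > 0, 0 ≤ φ r) (hsum : Summable fun m : ℕ => φ (ε / 2 + m * ε))
    (u : Finset ι) (x : ι → ℝ) (hsep : (u : Set ι).Pairwise fun i j => ε ≤ |x i - x j|)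
    (hfar : ∀ i ∈ u, ε / 2 ≤ x i) :
    ∑ i ∈ u, φ (x i) ≤ ∑' m : ℕ, φ (ε / 2 + m * ε) := by
  classical
  -- `x i` lies in the cell `[ε/2 + m ε, ε/2 + (m+1) ε)` with `m = bin i`,
  -- and a cell holds at most one point
  set bin : ι → ℕ := fun i => ⌊(x i - ε / 2) / ε⌋₊
  have hbin_le : ∀ i ∈ u, ε / 2 + bin i * ε ≤ x i := fun i hi => by
    have := Nat.floor_le (div_nonneg (sub_nonneg.2 (hfar i hi)) hε.le)
    rw [le_div_iff₀ hε] at this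
    linarith
  have hlt_bin : ∀ i, x i < ε / 2 + (bin i + 1) * ε := fun i => by
    have := Nat.lt_floor_add_one ((x i - ε / 2) / ε)
    rw [div_lt_iff₀ hε] at this
    linarith
  have hinj : InjOn bin u := by
    intro i hi j hj hij
    by_contra hne
    have hsep_ij : ε ≤ |x i - x j| := hsep hi hj hne
    have hi_le := hbin_le i hi
    have hj_le := hbin_le j hj
    have hi_lt := hlt_bin i
    have hj_lt := hlt_bin j
    simp only [hij] at hi_le hi_lt
    rw [le_abs] at hsep_ij
    rcases hsep_ij with h | h <;> linarith
  calc ∑ i ∈ u, φ (x i) ≤ ∑ i ∈ u, φ (ε / 2 + bin i * ε) :=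
        Finset.sum_le_sum fun i hi => hφ (by simp only [mem_Ioi]; positivity)
          (lt_of_lt_of_le (by positivity) (hbin_le i hi)) (hbin_le i hi)
    _ = ∑ m ∈ u.image bin, φ (ε / 2 + m * ε) :=
        (Finset.sum_image (f := fun m : ℕ => φ (ε / 2 + m * ε)) hinj).symm
    _ ≤ ∑' m : ℕ, φ (ε / 2 + m * ε) :=
        hsum.sum_le_tsum _ fun m _ => hφ0 _ (by positivity)

theorem sum_abs_le_two_mul_tsum_of_separated {ι : Type*} (hε : 0 < ε) (hφ : AntitoneOn φ (Ioi 0))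
    (hφ0 : ∀ r > 0, 0 ≤ φ r) (hsum : Summable fun m : ℕ => φ (ε / 2 + m * ε))
    (u : Finset ι) (x : ι → ℝ) (hsep : (u : Set ι).Pairwise fun i j => ε ≤ |x i - x j|)
    (hfar : ∀ i ∈ u, ε / 2 ≤ |x i|) :
    ∑ i ∈ u, φ |x i| ≤ 2 * ∑' m : ℕ, φ (ε / 2 + m * ε) := by
  classical
  rw [← Finset.sum_filter_add_sum_filter_not u (fun i => 0 ≤ x i), two_mul]
  have hsep' (p : ι → Prop) [DecidablePred p] :
      ((u.filter p : Finset ι) : Set ι).Pairwise fun i j => ε ≤ |x i - x j| :=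
    hsep.mono (Finset.coe_subset.2 (Finset.filter_subset _ _))
  gcongr
  · rw [Finset.sum_congr rfl fun i hi => by rw [abs_of_nonneg (Finset.mem_filter.1 hi).2]]
    refine sum_le_tsum_of_separated hε hφ hφ0 hsum _ x (hsep' _) fun i hi => ?_
    simpa [abs_of_nonneg (Finset.mem_filter.1 hi).2] using hfar i (Finset.mem_filter.1 hi).1
  · rw [Finset.sum_congr rfl fun i hi => by
      rw [abs_of_neg (not_le.1 (Finset.mem_filter.1 hi).2)]]
    refine sum_le_tsum_of_separated hε hφ hφ0 hsum _ (fun i => -x i)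
      ((hsep' _).mono' fun i j h => by rwa [← neg_sub', abs_neg]) fun i hi => ?_
    simpa [abs_of_neg (not_le.1 (Finset.mem_filter.1 hi).2)] using hfar i (Finset.mem_filter.1 hi).1

end Separated

section Gaps

variable {L : ℤ → ℝ} {ε : ℝ}

theorem le_abs_sub_of_le_gap (hL : Monotone L) {i j : ℤ} (hij : i ≠ j)
    (hgap : ε ≤ L (max i j) - L (max i j - 1)) : ε ≤ |L i - L j| := by
  rcases hij.lt_or_gt with h | h
  · rw [max_eq_right h.le] at hgap
    have := hL (show i ≤ j - 1 by omega)
    rw [abs_sub_comm]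
    exact hgap.trans (by linarith [le_abs_self (L j - L i)])
  · rw [max_eq_left h.le] at hgap
    have := hL (show j ≤ i - 1 by omega)
    exact hgap.trans (by linarith [le_abs_self (L i - L j)])

theorem add_mul_le_of_le_gap {b : ℤ} (hgap : ∀ k ≤ b, ε ≤ L k - L (k - 1)) (n : ℕ) :
    L (b - n) + n * ε ≤ L b := by
  induction n with
  | zero => simp
  | succ n ih =>
    have := hgap (b - n) (by omega)
    rw [sub_sub] at this
    push_cast
    linarith

theorem exists_far_point_of_le_gap (hL : Monotone L) {lo : ℤ}
    (hgap : ∀ k ≤ lo, ε ≤ L k - L (k - 1)) (n : ℕ) :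
    ∃ t, (∀ k, ε / 2 ≤ |L k - t|) ∧ ∀ k > lo, ε / 2 + n * ε ≤ L k - t := by
  refine ⟨L (lo - (n + 1)) + ε / 2, fun k => ?_, fun k hk => ?_⟩
  · rcases le_or_gt k (lo - (n + 1)) with hkj | hkj
    · have := hL hkj
      rw [abs_sub_comm]
      exact le_abs.2 (Or.inl (by linarith))
    · have := hL (show lo - (n + 1) + 1 ≤ k by omega)
      have := hgap (lo - (n + 1) + 1) (by omega)
      rw [add_sub_cancel_right] at this
      exact le_abs.2 (Or.inl (by linarith))
  · have := hL hk.le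
    have := add_mul_le_of_le_gap hgap (n + 1)
    push_cast at this
    linarith

end Gaps

section Tails

variable {φ : ℝ → ℝ} {ε : ℝ} {L : ℤ → ℝ}

theorem sum_le_of_le_gap_of_far (hε : 0 < ε) (hφ : AntitoneOn φ (Ioi 0))
    (hφ0 : ∀ r > 0, 0 ≤ φ r) (hsum : Summable fun m : ℕ => φ (ε / 2 + m * ε))
    (hL : Monotone L) {lo hi : ℤ} (hbot : ∀ k ≤ lo, ε ≤ L k - L (k - 1))
    (htop : ∀ k ≥ hi, ε ≤ L k - L (k - 1)) {t : ℝ} {n : ℕ} (hfar : ∀ k, ε / 2 ≤ |L k - t|)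
    (hright : ∀ k > lo, ε / 2 + n * ε ≤ L k - t)
    (hn : (Finset.Ioo lo hi).card * φ (ε / 2 + n * ε) ≤ 1) (u : Finset ℤ) :
    ∑ k ∈ u, φ |L k - t| ≤ 3 * ∑' m : ℕ, φ (ε / 2 + m * ε) + 1 := by
  have hsep {s : Finset ℤ} (hs : ∀ k ∈ s, ε ≤ L k - L (k - 1)) :
      (s : Set ℤ).Pairwise fun i j => ε ≤ |(L i - t) - (L j - t)| := fun i hi j hj hij => by
    dsimp only
    rw [sub_sub_sub_cancel_right]
    exact le_abs_sub_of_le_gap hL hij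
      (hs _ (by rcases max_choice i j with h | h <;> rw [h] <;> assumption))
  rw [← Finset.sum_filter_add_sum_filter_not u (· ≤ lo),
    ← Finset.sum_filter_add_sum_filter_not (u.filter (¬ · ≤ lo)) (· < hi)]
  have hleft_sum : ∑ k ∈ u with k ≤ lo, φ |L k - t| ≤ 2 * ∑' m : ℕ, φ (ε / 2 + m * ε) :=
    sum_abs_le_two_mul_tsum_of_separated hε hφ hφ0 hsum _ _
      (hsep fun k hk => hbot k (Finset.mem_filter.1 hk).2) fun k _ => hfar k
  have hpos : 0 < ε / 2 + n * ε := by positivity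
  have hmiddle_sum : ∑ k ∈ (u.filter (¬ · ≤ lo)).filter (· < hi), φ |L k - t| ≤ 1 := by
    have hsub : (u.filter (¬ · ≤ lo)).filter (· < hi) ⊆ Finset.Ioo lo hi := fun k hk => by
      simp only [Finset.mem_filter] at hk
      exact Finset.mem_Ioo.2 ⟨not_le.1 hk.1.2, hk.2⟩
    calc _ ≤ ((u.filter (¬ · ≤ lo)).filter (· < hi)).card • φ (ε / 2 + n * ε) :=
          Finset.sum_le_card_nsmul _ _ _ fun k hk => by
            have hk := hright k (not_le.1 (Finset.mem_filter.1 (Finset.mem_filter.1 hk).1).2)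
            exact hφ hpos (hpos.trans_le (hk.trans (le_abs_self _))) (hk.trans (le_abs_self _))
      _ ≤ (Finset.Ioo lo hi).card * φ (ε / 2 + n * ε) := by
          rw [nsmul_eq_mul]
          gcongr
          exact hφ0 _ hpos
      _ ≤ 1 := hn
  have hright_sum : ∑ k ∈ (u.filter (¬ · ≤ lo)).filter (¬ · < hi), φ |L k - t| ≤
      ∑' m : ℕ, φ (ε / 2 + m * ε) := by
    have hk {k} (hk : k ∈ (u.filter (¬ · ≤ lo)).filter (¬ · < hi)) :
        ε / 2 ≤ L k - t ∧ hi ≤ k := by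
      simp only [Finset.mem_filter, not_le, not_lt] at hk
      exact ⟨le_trans (by nlinarith) (hright k hk.1.2), hk.2⟩
    rw [Finset.sum_congr rfl fun k h => by
      rw [abs_of_pos (lt_of_lt_of_le (by positivity) (hk h).1)]]
    exact sum_le_tsum_of_separated hε hφ hφ0 hsum _ _ (hsep fun k h => htop k (hk h).2)
      fun k h => (hk h).1
  linarith

theorem exists_sum_le_of_eventually_le_gap (hε : 0 < ε) (hφ : AntitoneOn φ (Ioi 0))
    (hφ0 : ∀ r > 0, 0 ≤ φ r) (hsum : Summable fun m : ℕ => φ (ε / 2 + m * ε))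
    (hL : Monotone L) (hgap : ∀ᶠ k in cofinite, ε ≤ L k - L (k - 1))
    (a : ℝ → ℝ) (ha : ∀ ξ ≠ 0, a ξ ≤ φ |ξ|) :
    ∃ t, ∀ u : Finset ℤ, ∑ k ∈ u, a (L k - t) ≤ 3 * ∑' m : ℕ, φ (ε / 2 + m * ε) + 1 := by
  rw [Int.cofinite_eq, eventually_sup, eventually_atBot, eventually_atTop] at hgap
  obtain ⟨⟨lo, hbot⟩, ⟨hi, htop⟩⟩ := hgap
  obtain ⟨n, hn⟩ := ((hsum.tendsto_atTop_zero.const_mul ((Finset.Ioo lo hi).card : ℝ))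
    |>.eventually_lt_const (by rw [mul_zero]; exact one_pos)).exists
  obtain ⟨t, hfar, hright⟩ := exists_far_point_of_le_gap hL hbot n
  refine ⟨t, fun u => (Finset.sum_le_sum fun k _ => ha _ ?_).trans
    (sum_le_of_le_gap_of_far hε hφ hφ0 hsum hL hbot htop hfar hright hn.le u)⟩
  exact abs_pos.1 ((half_pos hε).trans_le (hfar k))

end Tails

theorem gmin_nonneg (L : ℤ → ℝ) : 0 ≤ gmin L :=
  Real.sInf_nonneg fun _ hc => hc.1

theorem gmin_le_of_infinite {L : ℤ → ℝ} {c : ℝ} (hc : 0 ≤ c)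
    (h : {k : ℤ | L k - L (k - 1) < c}.Infinite) : gmin L ≤ c :=
  csInf_le ⟨0, fun _ hc => hc.1⟩ ⟨hc, h⟩

theorem tendsto_gmin_nhds_zero {β : Type*} {l : Filter β} {L : β → ℤ → ℝ}
    (h : ∀ ε > 0, ∀ᶠ A in l, {k : ℤ | L A k - L A (k - 1) < ε}.Infinite) :
    Tendsto (fun A => gmin (L A)) l (nhds 0) :=
  tendsto_order.2 ⟨fun _ hb => Eventually.of_forall fun _ => hb.trans_le (gmin_nonneg _),
    fun _ hb => (h _ (half_pos hb)).mono fun _ hA =>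
      (gmin_le_of_infinite (half_pos hb).le hA).trans_lt (half_lt_self hb)⟩

theorem integral_exp_mul_exp_withDensity {ν : Measure ℝ} {g : ℝ → ℝ} (hg_nonneg : ∀ x, 0 ≤ g x)
    (hg : AEMeasurable g ν) (t ξ : ℝ) :
    ∫ x, Complex.exp ((2 * π * t * x : ℝ) * Complex.I) *
        Complex.exp ((-2 * π * ξ * x : ℝ) * Complex.I)
          ∂ν.withDensity (fun x => ENNReal.ofReal (g x))
      = ∫ x, (g x : ℂ) * Complex.exp ((-2 * π * (ξ - t) * x : ℝ) * Complex.I) ∂ν := by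
  rw [integral_withDensity_eq_integral_toReal_smul₀ hg.ennreal_ofReal
    (ae_of_all _ fun _ => ENNReal.ofReal_lt_top)]
  refine integral_congr_ae (ae_of_all _ fun x => ?_)
  dsimp only
  rw [ENNReal.toReal_ofReal (hg_nonneg x), Complex.real_smul, ← Complex.exp_add]
  congr 2
  push_cast
  ring

theorem le_tsum_of_frame {μ : Measure ℝ} [IsProbabilityMeasure μ] {A : ℝ} {Λ : ℤ → ℝ}
    (hframe : ∀ f : ℝ → ℂ, MemLp f 2 μ → A * ∫ x, ‖f x‖ ^ 2 ∂μ ≤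
      ∑' k : ℤ, ‖∫ x, f x * Complex.exp ((-2 * π * Λ k * x : ℝ) * Complex.I) ∂μ‖ ^ 2) (t : ℝ) :
    A ≤ ∑' k : ℤ, ‖∫ x, Complex.exp ((2 * π * t * x : ℝ) * Complex.I) *
      Complex.exp ((-2 * π * Λ k * x : ℝ) * Complex.I) ∂μ‖ ^ 2 := by
  have hnorm (x : ℝ) : ‖Complex.exp ((2 * π * t * x : ℝ) * Complex.I)‖ = 1 :=
    Complex.norm_exp_ofReal_mul_I _
  have hmem : MemLp (fun x : ℝ => Complex.exp ((2 * π * t * x : ℝ) * Complex.I)) 2 μ :=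
    MemLp.of_bound (by fun_prop) 1 (ae_of_all _ fun x => (hnorm x).le)
  have hint : ∫ x, ‖Complex.exp ((2 * π * t * x : ℝ) * Complex.I)‖ ^ 2 ∂μ = 1 := by
    simp only [hnorm, one_pow]
    simp
  simpa only [hint, mul_one] using hframe _ hmem

theorem stmt3_general (g : ℝ → ℝ) (hg_nonneg : ∀ x, 0 ≤ g x) (hg_int : Integrable g)
    (μ : Measure ℝ) (hμ : μ = volume.withDensity (fun x => ENNReal.ofReal (g x)))
    [IsProbabilityMeasure μ]
    (α : ℝ) (hα : 1 / 2 < α)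
    (C : ℝ)
    (hdecay : ∀ ξ : ℝ, ξ ≠ 0 →
      ‖∫ x : ℝ, (g x : ℂ) * Complex.exp ((-2 * π * ξ * x : ℝ) * Complex.I)‖ ≤ C * |ξ| ^ (-α))
    (lam : ℝ → ℤ → ℝ) (hmono : ∀ A > 0, StrictMono (lam A))
    (hframe : ∀ A > 0, ∀ f : ℝ → ℂ, MemLp f 2 μ →
      A * ∫ x, ‖f x‖ ^ 2 ∂μ ≤
        ∑' k : ℤ, ‖∫ x, f x * Complex.exp ((-2 * π * lam A k * x : ℝ) * Complex.I) ∂μ‖ ^ 2) :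
    Tendsto (fun A : ℝ => gmin (lam A)) atTop (nhds 0) := by
  subst hμ
  set φ : ℝ → ℝ := fun r => C ^ 2 * r ^ (-(2 * α))
  have hφ : AntitoneOn φ (Ioi 0) := fun r hr s _ hrs =>
    mul_le_mul_of_nonneg_left (Real.rpow_le_rpow_of_nonpos hr hrs (by linarith)) (sq_nonneg C)
  have hφ0 : ∀ r > 0, 0 ≤ φ r := fun r hr => by positivity
  have hdecay_sq : ∀ ξ ≠ 0,
      ‖∫ x : ℝ, (g x : ℂ) * Complex.exp ((-2 * π * ξ * x : ℝ) * Complex.I)‖ ^ 2 ≤ φ |ξ| :=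
    fun ξ hξ => (pow_le_pow_left₀ (norm_nonneg _) (hdecay ξ hξ) 2).trans_eq (by
      rw [mul_pow, ← Real.rpow_mul_natCast (abs_nonneg ξ)]
      simp only [φ]
      ring_nf)
  refine tendsto_gmin_nhds_zero fun ε hε => ?_
  have hsum : Summable fun m : ℕ => φ (ε / 2 + m * ε) :=
    (summable_add_mul_rpow_neg (half_pos hε) hε (by linarith)).mul_left _
  have hS : 0 ≤ ∑' m : ℕ, φ (ε / 2 + m * ε) := tsum_nonneg fun m => hφ0 _ (by positivity)
  filter_upwards [eventually_gt_atTop (3 * ∑' m : ℕ, φ (ε / 2 + m * ε) + 1)] with A hA_large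
  by_contra hfin
  have hA0 : 0 < A := by linarith
  have hgap : ∀ᶠ k in cofinite, ε ≤ lam A k - lam A (k - 1) :=
    eventually_cofinite.2 (by simpa only [not_le] using Set.not_infinite.1 hfin)
  obtain ⟨t, ht⟩ := exists_sum_le_of_eventually_le_gap hε hφ hφ0 hsum (hmono A hA0).monotone
    hgap _ hdecay_sq
  have hA := le_tsum_of_frame (hframe A hA0) t
  simp_rw [integral_exp_mul_exp_withDensity hg_nonneg hg_int.aemeasurable] at hA
  exact (hA.trans (tsum_le_of_sum_le' (by positivity) ht)).not_gt hA_large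

theorem stmt3 (g : ℝ → ℝ) (hg_nonneg : ∀ x, 0 ≤ g x) (hg_int : Integrable g)
    (μ : Measure ℝ) (hμ : μ = volume.withDensity (fun x => ENNReal.ofReal (g x)))
    [IsProbabilityMeasure μ]
    (α : ℝ) (hα : 1 / 2 < α)
    (C : ℝ) (hC : 0 < C)
    (hdecay : ∀ ξ : ℝ, ξ ≠ 0 →
      ‖∫ x : ℝ, (g x : ℂ) * Complex.exp ((-2 * π * ξ * x : ℝ) * Complex.I)‖ ≤ C * |ξ| ^ (-α))
    (lam : ℝ → ℤ → ℝ) (hmono : ∀ A > 0, StrictMono (lam A))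
    (hframe : ∀ A > 0, ∀ f : ℝ → ℂ, MemLp f 2 μ →
      A * ∫ x, ‖f x‖ ^ 2 ∂μ ≤
        ∑' k : ℤ, ‖∫ x, f x * Complex.exp ((-2 * π * lam A k * x : ℝ) * Complex.I) ∂μ‖ ^ 2) :
    Tendsto (fun A : ℝ => gmin (lam A)) atTop (nhds 0) :=
  stmt3_general g hg_nonneg hg_int μ hμ α hα C hdecay lam hmono hframe
end

section
/- For all real x ≥ 1/2, x · ζ(2, x) ≤ π²/4, with equality at x = 1/2, where ζ(2, x) = ∑_{n=0}^∞ 1/(x+n)² is the Hurwitz zeta function at s = 2. -/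
/-!
Write `x ζ(2, x) = 1/x + ½ ζ(2, x + 1) + (x - ½) ζ(2, x + 1)`. Since `ζ(2, ·)` is antitone,
`ζ(2, x + 1) ≤ ζ(2, 3/2)`, and since `1/y² ≤ 1/(y - ½) - 1/(y + ½)` telescopes,
`ζ(2, x + 1) ≤ 1/(x + ½)`. As `π²/4 = ½ ζ(2, ½) = 2 + ½ ζ(2, 3/2)`, it remains to check
`1/x + (x - ½)/(x + ½) ≤ 2`. The value `ζ(2, ½) = 4 ∑ 1/(2n + 1)² = π²/2` comes from splitting
`ζ(2) = π²/6` into its even and odd terms.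
-/

open scoped Real
open Filter Topology

theorem hasSum_sub_succ_of_antitone {f : ℕ → ℝ} (hf : Antitone f)
    (hlim : Tendsto f atTop (𝓝 0)) : HasSum (fun n => f n - f (n + 1)) (f 0) := by
  rw [hasSum_iff_tendsto_nat_of_nonneg fun n => sub_nonneg.2 (hf n.le_succ)]
  simp only [Finset.sum_range_sub']
  simpa using tendsto_const_nhds.sub hlim

theorem hasSum_one_div_two_mul_add_one_sq :
    HasSum (fun n : ℕ => 1 / (2 * n + 1 : ℝ) ^ 2) (π ^ 2 / 8) := by
  have heven : HasSum (fun k : ℕ => 1 / ((2 * k : ℕ) : ℝ) ^ 2) (π ^ 2 / 24) := by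
    rw [show π ^ 2 / 24 = 1 / 4 * (π ^ 2 / 6) by ring]
    exact (hasSum_zeta_two.mul_left _).congr_fun fun k => by push_cast; ring
  obtain ⟨t, hodd⟩ : Summable fun k : ℕ => 1 / ((2 * k + 1 : ℕ) : ℝ) ^ 2 :=
    hasSum_zeta_two.summable.comp_injective (i := fun k => 2 * k + 1) fun _ _ h => by
      simp only at h; omega
  have hsplit := HasSum.even_add_odd (f := fun n : ℕ => 1 / (n : ℝ) ^ 2) heven hodd
  obtain rfl : t = π ^ 2 / 8 := by linarith [hsplit.unique hasSum_zeta_two]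
  exact hodd.congr_fun fun k => by push_cast; rfl

noncomputable def hurwitzZetaTwo (a : ℝ) : ℝ := ∑' n : ℕ, 1 / (a + n) ^ 2

theorem hurwitzZetaTwo_one_half : hurwitzZetaTwo (1 / 2) = π ^ 2 / 2 := by
  refine HasSum.tsum_eq ?_
  rw [show π ^ 2 / 2 = 4 * (π ^ 2 / 8) by ring]
  exact (hasSum_one_div_two_mul_add_one_sq.mul_left 4).congr_fun fun n => by field_simp; ring

theorem hasSum_one_div_add_sub_one_div_add_succ {b : ℝ} (hb : 0 < b) :
    HasSum (fun n : ℕ => 1 / (b + n) - 1 / (b + n + 1)) (1 / b) := by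
  have hanti : Antitone fun n : ℕ => 1 / (b + n) := fun m n hmn =>
    one_div_le_one_div_of_le (by positivity) (by gcongr)
  have hlim : Tendsto (fun n : ℕ => 1 / (b + n)) atTop (𝓝 0) := by
    simpa only [one_div, Function.comp_def] using
      tendsto_inv_atTop_zero.comp (tendsto_atTop_add_const_left _ b tendsto_natCast_atTop_atTop)
  simpa [add_assoc] using hasSum_sub_succ_of_antitone hanti hlim

theorem one_div_add_sq_le {a : ℝ} (ha : 1 / 2 < a) (n : ℕ) :
    1 / (a + n) ^ 2 ≤ 1 / (a - 1 / 2 + n) - 1 / (a - 1 / 2 + n + 1) := by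
  have h : 0 < a - 1 / 2 + n := by positivity
  rw [div_sub_div _ _ h.ne' (by positivity), div_le_div_iff₀ (by positivity) (by positivity)]
  nlinarith

theorem summable_one_div_add_sq (a : ℝ) : Summable fun n : ℕ => 1 / (a + n) ^ 2 := by
  refine ((Real.summable_one_div_nat_add_rpow a 2).2 one_lt_two).congr fun n => ?_
  rw [Real.rpow_two, sq_abs, add_comm]

theorem hurwitzZetaTwo_le_one_div_sub {a : ℝ} (ha : 1 / 2 < a) :
    hurwitzZetaTwo a ≤ 1 / (a - 1 / 2) :=
  hasSum_le (one_div_add_sq_le ha) (summable_one_div_add_sq a).hasSum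
    (hasSum_one_div_add_sub_one_div_add_succ (sub_pos.2 ha))

theorem hurwitzZetaTwo_antitoneOn : AntitoneOn hurwitzZetaTwo (Set.Ioi 0) :=
  fun a (ha : 0 < a) b _ hab => (summable_one_div_add_sq b).tsum_le_tsum
    (fun n => one_div_le_one_div_of_le (by positivity) (by gcongr)) (summable_one_div_add_sq a)

theorem hurwitzZetaTwo_eq_one_div_sq_add (a : ℝ) :
    hurwitzZetaTwo a = 1 / a ^ 2 + hurwitzZetaTwo (a + 1) := by
  rw [hurwitzZetaTwo, (summable_one_div_add_sq a).tsum_eq_zero_add, hurwitzZetaTwo]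
  simp [add_assoc, add_comm (1 : ℝ)]

theorem mul_hurwitzZetaTwo_le {x : ℝ} (hx : 1 / 2 ≤ x) : x * hurwitzZetaTwo x ≤ π ^ 2 / 4 := by
  have hx0 : 0 < x := by linarith
  have hmono : hurwitzZetaTwo (x + 1) ≤ hurwitzZetaTwo (3 / 2) :=
    hurwitzZetaTwo_antitoneOn (by norm_num) (by simp only [Set.mem_Ioi]; linarith) (by linarith)
  have htail : hurwitzZetaTwo (x + 1) ≤ 1 / (x + 1 / 2) := by
    convert hurwitzZetaTwo_le_one_div_sub (a := x + 1) (by linarith) using 2; ring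
  have hhalf : π ^ 2 / 4 = 2 + hurwitzZetaTwo (3 / 2) / 2 := by
    have h := hurwitzZetaTwo_one_half
    rw [hurwitzZetaTwo_eq_one_div_sq_add] at h
    norm_num at h
    linarith
  have hfirst : 1 / x + (x - 1 / 2) * (1 / (x + 1 / 2)) ≤ 2 := by
    field_simp
    nlinarith
  calc x * hurwitzZetaTwo x
      = 1 / x + hurwitzZetaTwo (x + 1) / 2 + (x - 1 / 2) * hurwitzZetaTwo (x + 1) := by
        rw [hurwitzZetaTwo_eq_one_div_sq_add]; field_simp; ring
    _ ≤ 1 / x + hurwitzZetaTwo (3 / 2) / 2 + (x - 1 / 2) * (1 / (x + 1 / 2)) := by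
        gcongr
    _ ≤ π ^ 2 / 4 := by rw [hhalf]; linarith

theorem stmt17 :
    (∀ x : ℝ, 1 / 2 ≤ x → x * ∑' n : ℕ, 1 / (x + n) ^ 2 ≤ π ^ 2 / 4) ∧
    (1 / 2 : ℝ) * ∑' n : ℕ, 1 / ((1 / 2 : ℝ) + n) ^ 2 = π ^ 2 / 4 := by
  refine ⟨fun x hx => mul_hurwitzZetaTwo_le hx, ?_⟩
  change 1 / 2 * hurwitzZetaTwo (1 / 2) = _
  rw [hurwitzZetaTwo_one_half]
  ring
end
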